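/- arXiv:2011.07361 — 4 statements merged into one kernel-verified Lean document; each statement's English description precedes it below -/
import Mathlib

section
/- Let g : ℝ → ℂ be an almost periodic function (the set of translates {g(· - t) : t ∈ ℝ} is precompact in the space of bounded uniformly continuous functions with sup norm). Suppose there exist ε > 0 and a sequence b_n → ∞ such that for every x ∈ ℝ there is j(x) with |g(x + b_n)| < ε for all n ≥ j(x). Then |g(0)| ≤ 3ε. -/
open Filter

set_option maxHeartbeats 1000000
set_option synthInstance.maxHeartbeats 400000

/-- Let `g : ℝ → ℂ` be almost periodic (the set of translates is precompact in the space of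
bounded uniformly continuous functions with sup norm). If there are `ε > 0` and a sequence
`b_n → ∞` such that for every `x` one has `|g(x + b_n)| < ε` for all large `n`,
then `|g(0)| ≤ 3 ε`. -/
theorem ap_small_along_sequence (ε : ℝ) (hε : 0 < ε)
    (g : BoundedContinuousFunction ℝ ℂ) (hu : UniformContinuous g)
    (hcpt : IsCompact (closure
      {h : BoundedContinuousFunction ℝ ℂ | ∃ t : ℝ, ∀ x, h x = g (x - t)}))
    (b : ℕ → ℝ) (hb : Tendsto b atTop atTop)
    (hsmall : ∀ x : ℝ, ∃ j : ℕ, ∀ n, j ≤ n → ‖g (x + b n)‖ < ε) :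
    ‖g 0‖ ≤ 3 * ε := by
  let u : ℕ → BoundedContinuousFunction ℝ ℂ := fun n =>
    g.compContinuous ⟨fun x => x + b n, continuous_id.add continuous_const⟩
  have hu_mem : ∀ n, u n ∈ closure
      {h : BoundedContinuousFunction ℝ ℂ | ∃ t : ℝ, ∀ x, h x = g (x - t)} := fun n =>
    subset_closure ⟨-(b n), fun x => by
      simp [u, BoundedContinuousFunction.compContinuous_apply, sub_neg_eq_add]⟩
  obtain ⟨h, -, φ, hφ, htend⟩ := hcpt.tendsto_subseq hu_mem
  have hcauchy := htend.cauchySeq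
  rw [Metric.cauchySeq_iff] at hcauchy
  obtain ⟨N, hN⟩ := hcauchy ε hε
  obtain ⟨j, hj⟩ := hsmall (-(b (φ N)))
  set k := max N j with hk
  have hkj : j ≤ φ k := le_trans (le_max_right N j) (le_trans (hφ.le_apply) le_rfl)
  have hdist : dist (u (φ k)) (u (φ N)) < ε := hN k (le_max_left N j) N le_rfl
  have h1 : dist (u (φ k) (-(b (φ N)))) (u (φ N) (-(b (φ N)))) ≤ dist (u (φ k)) (u (φ N)) :=
    BoundedContinuousFunction.dist_coe_le_dist _
  have e1 : u (φ N) (-(b (φ N))) = g 0 := by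
    simp [u, BoundedContinuousFunction.compContinuous_apply]
  have e2 : u (φ k) (-(b (φ N))) = g (-(b (φ N)) + b (φ k)) := by
    simp [u, BoundedContinuousFunction.compContinuous_apply]
  have h2 : ‖g (-(b (φ N)) + b (φ k))‖ < ε := hj (φ k) hkj
  have h3 : ‖g 0‖ - ‖g (-(b (φ N)) + b (φ k))‖ ≤ dist (g (-(b (φ N)) + b (φ k))) (g 0) := by
    rw [dist_eq_norm, norm_sub_rev]
    exact norm_sub_norm_le _ _
  rw [e1, e2] at h1
  linarith
end

section
/- If g, h : ℝ → ℂ are Bohr almost periodic functions and g(x) - h(x) → 0 as |x| → ∞, then g = h. -/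
open Filter

/-- Bohr almost periodicity: `g` is continuous and for every `ε > 0` the set of
`ε`-almost-periods of `g` is relatively dense in `ℝ`. -/
def BohrAlmostPeriodic (g : ℝ → ℂ) : Prop :=
  Continuous g ∧ ∀ ε > (0 : ℝ), ∃ L > (0 : ℝ), ∀ a : ℝ,
    ∃ τ ∈ Set.Icc a (a + L), ∀ x : ℝ, ‖g (x + τ) - g x‖ < ε

/-- If `g, h` are Bohr almost periodic and `g(x) - h(x) → 0` as `|x| → ∞`, then `g = h`. -/
theorem bohrAP_eq_of_diff_tendsto_zero (g h : ℝ → ℂ)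
    (hg : BohrAlmostPeriodic g) (hh : BohrAlmostPeriodic h)
    (hlim : Tendsto (fun x => g x - h x) (cocompact ℝ) (nhds 0)) : g = h := by
  funext x₀
  rw [← sub_eq_zero]
  by_contra hne
  have hcpos : 0 < ‖g x₀ - h x₀‖ := norm_pos_iff.mpr hne
  set c := ‖g x₀ - h x₀‖ with hc
  set ε := c / 8 with hεdef
  have hε : 0 < ε := by positivity
  -- eventually bound from the limit
  have hev : ∀ᶠ x in cocompact ℝ, ‖g x - h x‖ < ε := by
    have := hlim.eventually (Metric.ball_mem_nhds (0 : ℂ) hε)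
    filter_upwards [this] with x hx
    simpa [dist_eq_norm] using hx
  obtain ⟨s, hs, hsub⟩ := hasBasis_cocompact.eventually_iff.mp hev
  obtain ⟨R₁, hR₁⟩ := hs.isBounded.subset_closedBall 0
  set R := max R₁ 0 with hRdef
  have hR0 : (0:ℝ) ≤ R := le_max_right _ _
  have hfar : ∀ x : ℝ, R < x → ‖g x - h x‖ < ε := by
    intro x hx
    apply hsub
    intro hxs
    have := hR₁ hxs
    rw [Metric.mem_closedBall, dist_zero_right, Real.norm_eq_abs] at this
    have hx1 : x ≤ R₁ := le_trans (le_abs_self x) this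
    have : R₁ ≤ R := le_max_left _ _
    linarith
  obtain ⟨_, hgap⟩ := hg
  obtain ⟨_, hhap⟩ := hh
  obtain ⟨Lg, hLg, hgτ⟩ := hgap ε hε
  obtain ⟨Lh, hLh, hhτ⟩ := hhap ε hε
  set a := R + |x₀| + 1 with ha
  obtain ⟨τ, hτmem, hτ⟩ := hgτ a
  obtain ⟨σ, hσmem, hσ⟩ := hhτ a
  have hτge : a ≤ τ := hτmem.1
  have hσge : a ≤ σ := hσmem.1
  have hx₀ : -|x₀| ≤ x₀ := neg_abs_le x₀
  have far1 : R < x₀ + τ := by linarith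
  have far2 : R < x₀ + σ := by
    have : (0:ℝ) ≤ |x₀| := abs_nonneg x₀
    linarith
  have far3 : R < x₀ + τ + σ := by
    have : (0:ℝ) ≤ |x₀| := abs_nonneg x₀
    linarith
  -- the seven estimates
  have e1 : ‖g x₀ - g (x₀ + τ)‖ < ε := by rw [norm_sub_rev]; exact hτ x₀
  have e2 : ‖g (x₀ + τ) - h (x₀ + τ)‖ < ε := hfar _ far1
  have e3 : ‖h (x₀ + τ) - h (x₀ + τ + σ)‖ < ε := by rw [norm_sub_rev]; exact hσ (x₀ + τ)
  have e4 : ‖h (x₀ + τ + σ) - g (x₀ + τ + σ)‖ < ε := by rw [norm_sub_rev]; exact hfar _ far3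
  have e5 : ‖g (x₀ + τ + σ) - g (x₀ + σ)‖ < ε := by
    have := hτ (x₀ + σ)
    rwa [show x₀ + σ + τ = x₀ + τ + σ from by ring] at this
  have e6 : ‖g (x₀ + σ) - h (x₀ + σ)‖ < ε := hfar _ far2
  have e7 : ‖h (x₀ + σ) - h x₀‖ < ε := hσ x₀
  have key : c ≤ ‖g x₀ - g (x₀ + τ)‖ + ‖g (x₀ + τ) - h (x₀ + τ)‖ +
      ‖h (x₀ + τ) - h (x₀ + τ + σ)‖ + ‖h (x₀ + τ + σ) - g (x₀ + τ + σ)‖ +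
      ‖g (x₀ + τ + σ) - g (x₀ + σ)‖ + ‖g (x₀ + σ) - h (x₀ + σ)‖ + ‖h (x₀ + σ) - h x₀‖ := by
    calc c = ‖(g x₀ - g (x₀ + τ)) + (g (x₀ + τ) - h (x₀ + τ)) +
        (h (x₀ + τ) - h (x₀ + τ + σ)) + (h (x₀ + τ + σ) - g (x₀ + τ + σ)) +
        (g (x₀ + τ + σ) - g (x₀ + σ)) + (g (x₀ + σ) - h (x₀ + σ)) + (h (x₀ + σ) - h x₀)‖ := by
          rw [hc]; congr 1; ring
    _ ≤ _ := by
          refine le_trans (norm_add_le _ _) (add_le_add ?_ le_rfl)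
          refine le_trans (norm_add_le _ _) (add_le_add ?_ le_rfl)
          refine le_trans (norm_add_le _ _) (add_le_add ?_ le_rfl)
          refine le_trans (norm_add_le _ _) (add_le_add ?_ le_rfl)
          refine le_trans (norm_add_le _ _) (add_le_add ?_ le_rfl)
          exact norm_add_le _ _
  have : c < 7 * ε := by linarith
  rw [hεdef] at this
  linarith
end

section
/- Define measures on ℝ recursively: μ_0 = δ_0, T_k ρ = (1/(2k)) ∑_{j=1}^k (S_{-r_k j/k} ρ + S_{r_k j/k} ρ) where r_k = 2^{-(k+1)^2} and S_t is translation by t, and μ_k = μ_{k-1} + (S_{-3^{k-1}} + S_{3^{k-1}}) T_k μ_{k-1}. Then each μ_s is a positive finite discrete measure with supp μ_s ⊆ ((1-3^s)/2 - 1/3, (3^s-1)/2 + 1/3). -/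
open MeasureTheory
open scoped ENNReal

/-- `r k = 2^{-(k+1)^2}`. -/
noncomputable def r (k : ℕ) : ℝ := (2 : ℝ) ^ (-(((k : ℤ) + 1) ^ 2))

/-- `S t` is the shift of a measure by `t`. -/
noncomputable def S (t : ℝ) (ρ : Measure ℝ) : Measure ℝ := ρ.map (· + t)

/-- `T k` averages the `2k` shifts by `± r_k j / k`, `j = 1, …, k`. -/
noncomputable def T (k : ℕ) (ρ : Measure ℝ) : Measure ℝ :=
  ((2 * k : ℝ≥0∞))⁻¹ •
    ∑ j ∈ Finset.Icc 1 k, (S (-(r k * j / k)) ρ + S (r k * j / k) ρ)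

/-- `μ_0 = δ_0`, `μ_k = μ_{k-1} + (S_{-3^{k-1}} + S_{3^{k-1}}) T_k μ_{k-1}`. -/
noncomputable def μseq : ℕ → Measure ℝ
  | 0 => Measure.dirac 0
  | k + 1 => μseq k +
      (S (-(3 ^ k : ℝ)) (T (k + 1) (μseq k)) + S ((3 ^ k : ℝ)) (T (k + 1) (μseq k)))

/-- The interval `I_s = ((1-3^s)/2 - 1/3, (3^s-1)/2 + 1/3)`. -/
noncomputable def I (s : ℕ) : Set ℝ :=
  Set.Ioo ((1 - 3 ^ s) / 2 - 1 / 3) ((3 ^ s - 1) / 2 + 1 / 3)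

/-! ### Auxiliary lemmas -/

lemma r_eq (k : ℕ) : r k = (1/2 : ℝ) ^ ((k+1)^2) := by
  rw [r, zpow_neg, show ((k:ℤ)+1)^2 = (((k+1)^2 : ℕ) : ℤ) by push_cast; ring,
    zpow_natCast, one_div, inv_pow]

lemma r_pos (k : ℕ) : 0 < r k := by rw [r_eq]; positivity

lemma r_le (k : ℕ) (hk : 1 ≤ k) : r k ≤ (1/2 : ℝ) ^ (k + 3) := by
  rw [r_eq]
  apply pow_le_pow_of_le_one (by norm_num) (by norm_num)
  nlinarith

noncomputable def cseq (s : ℕ) : ℝ := ∑ i ∈ Finset.Icc 1 s, r i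
noncomputable def bseq (s : ℕ) : ℝ := (3 ^ s - 1) / 2 + cseq s

lemma cseq_succ (s : ℕ) : cseq (s+1) = cseq s + r (s+1) := by
  rw [cseq, cseq, Finset.sum_Icc_succ_top (by omega)]

lemma cseq_bound (s : ℕ) : cseq s ≤ 1/8 - (1/8) * (1/2:ℝ)^s := by
  induction s with
  | zero => simp [cseq]
  | succ n ih =>
      rw [cseq_succ]
      have h1 : r (n+1) ≤ (1/2:ℝ)^(n+4) := r_le (n+1) (by omega)
      have h2 : (1/2:ℝ)^(n+4) = (1/16) * (1/2)^n := by ring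
      have h3 : (1/2:ℝ)^(n+1) = (1/2) * (1/2)^n := by ring
      nlinarith

lemma cseq_le (s : ℕ) : cseq s ≤ 1/8 := by
  have h : (0:ℝ) ≤ (1/8) * (1/2)^s := by positivity
  linarith [cseq_bound s]

lemma cseq_nonneg (s : ℕ) : 0 ≤ cseq s :=
  Finset.sum_nonneg fun i _ => (r_pos i).le

lemma bseq_succ (s : ℕ) : bseq (s+1) = bseq s + 3^s + r (s+1) := by
  rw [bseq, bseq, cseq_succ]; ring

lemma null_mono {ρ : Measure ℝ} {F G : Finset ℝ} (hFG : F ⊆ G) (h : ρ ((↑F : Set ℝ)ᶜ) = 0) :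
    ρ ((↑G : Set ℝ)ᶜ) = 0 :=
  measure_mono_null (Set.compl_subset_compl.2 (Finset.coe_subset.2 hFG)) h

lemma S_univ (t : ℝ) (ρ : Measure ℝ) : S t ρ Set.univ = ρ Set.univ := by
  rw [S, Measure.map_apply (measurable_add_const t) MeasurableSet.univ, Set.preimage_univ]

lemma S_null {ρ : Measure ℝ} {F : Finset ℝ} (h : ρ ((↑F : Set ℝ)ᶜ) = 0) (t : ℝ) :
    S t ρ ((↑(F.image (· + t)) : Set ℝ)ᶜ) = 0 := by
  rw [S, Measure.map_apply (measurable_add_const t)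
    (F.image (· + t)).finite_toSet.measurableSet.compl]
  apply measure_mono_null _ h
  intro x hx
  simp only [Set.mem_preimage, Set.mem_compl_iff, Finset.coe_image, Set.mem_image,
    Finset.mem_coe] at hx ⊢
  exact fun hxF => hx ⟨x, hxF, rfl⟩

noncomputable def TF (k : ℕ) (F : Finset ℝ) : Finset ℝ :=
  (Finset.Icc 1 k).biUnion
    (fun j => F.image (· + (-(r k * j / k))) ∪ F.image (· + (r k * j / k)))

lemma T_null {ρ : Measure ℝ} {F : Finset ℝ} (h : ρ ((↑F : Set ℝ)ᶜ) = 0) (k : ℕ) :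
    T k ρ ((↑(TF k F) : Set ℝ)ᶜ) = 0 := by
  rw [T, Measure.smul_apply, Measure.finset_sum_apply]
  have : ∀ j ∈ Finset.Icc 1 k,
      (S (-(r k * j / k)) ρ + S (r k * j / k) ρ) ((↑(TF k F) : Set ℝ)ᶜ) = 0 := by
    intro j hj
    rw [Measure.add_apply]
    have hsub : F.image (· + (-(r k * j / k))) ∪ F.image (· + (r k * j / k)) ⊆ TF k F := by
      intro y hy
      simp only [TF, Finset.mem_biUnion]
      exact ⟨j, hj, hy⟩
    have h1 : F.image (· + (-(r k * j / k))) ⊆ TF k F :=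
      Finset.union_subset_iff.mp hsub |>.1
    have h2 : F.image (· + (r k * j / k)) ⊆ TF k F :=
      Finset.union_subset_iff.mp hsub |>.2
    rw [null_mono h1 (S_null h _), null_mono h2 (S_null h _), add_zero]
  rw [Finset.sum_eq_zero this, smul_zero]

lemma TF_mem {k : ℕ} {F : Finset ℝ} {B : ℝ} (hF : ∀ x ∈ F, |x| ≤ B)
    {x : ℝ} (hx : x ∈ TF k F) : |x| ≤ B + r k := by
  simp only [TF, Finset.mem_biUnion, Finset.mem_union, Finset.mem_image,
    Finset.mem_Icc] at hx
  obtain ⟨j, hj, hx⟩ := hx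
  have hrk : (0:ℝ) < r k := r_pos k
  have hjk : r k * j / k ≤ r k := by
    rcases Nat.eq_zero_or_pos k with hk | hk
    · omega
    have hk' : (0:ℝ) < k := by exact_mod_cast hk
    rw [div_le_iff₀ hk']
    have : (j:ℝ) ≤ k := by exact_mod_cast hj.2
    nlinarith
  have hjk0 : 0 ≤ r k * j / k := by positivity
  rcases hx with ⟨y, hy, rfl⟩ | ⟨y, hy, rfl⟩ <;>
    · have := hF y hy
      rw [abs_le] at *
      constructor <;> cases this <;> linarith

lemma T_finite (ρ : Measure ℝ) [IsFiniteMeasure ρ] (k : ℕ) :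
    T k ρ Set.univ < ∞ := by
  rcases Nat.eq_zero_or_pos k with hk | hk
  · subst hk; simp [T]
  rw [T, Measure.smul_apply, Measure.finset_sum_apply, smul_eq_mul]
  apply ENNReal.mul_lt_top
  · rw [ENNReal.inv_lt_top]
    have : (k:ℝ≥0∞) ≠ 0 := by exact_mod_cast hk.ne'
    exact ENNReal.mul_pos (by norm_num) this
  · apply ENNReal.sum_lt_top.2
    intro j _
    rw [Measure.add_apply, S_univ, S_univ]
    exact ENNReal.add_lt_top.2 ⟨measure_lt_top ρ _, measure_lt_top ρ _⟩

lemma museq_aux (s : ℕ) :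
    IsFiniteMeasure (μseq s) ∧
    ∃ F : Finset ℝ, (∀ x ∈ F, |x| ≤ bseq s) ∧ μseq s ((↑F : Set ℝ)ᶜ) = 0 := by
  induction s with
  | zero =>
      refine ⟨by rw [μseq]; infer_instance, {0}, ?_, ?_⟩
      · intro x hx
        simp only [Finset.mem_singleton] at hx
        subst hx
        simp [bseq, cseq]
      · rw [μseq]
        simp
  | succ k ih =>
      obtain ⟨hfin, F, hFb, hF0⟩ := ih
      haveI := hfin
      haveI hTfin : IsFiniteMeasure (T (k+1) (μseq k)) := ⟨T_finite _ _⟩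
      haveI hS1 : IsFiniteMeasure (S (-(3:ℝ)^k) (T (k+1) (μseq k))) := by
        rw [S]; infer_instance
      haveI hS2 : IsFiniteMeasure (S ((3:ℝ)^k) (T (k+1) (μseq k))) := by
        rw [S]; infer_instance
      constructor
      · rw [μseq]; infer_instance
      · set G : Finset ℝ := TF (k+1) F with hG
        refine ⟨F ∪ G.image (· + (-(3:ℝ)^k)) ∪ G.image (· + (3:ℝ)^k), ?_, ?_⟩
        · intro x hx
          have hrpos := (r_pos (k+1)).le
          have h3k : (0:ℝ) < 3^k := by positivity
          have hGb : ∀ y ∈ G, |y| ≤ bseq k + r (k+1) := fun y hy => TF_mem hFb hy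
          simp only [Finset.mem_union, Finset.mem_image] at hx
          rw [bseq_succ]
          rcases hx with (hx | ⟨y, hy, rfl⟩) | ⟨y, hy, rfl⟩
          · have := hFb x hx
            rw [abs_le] at *
            constructor <;> cases this <;> linarith
          · have := hGb y hy
            rw [abs_le] at *
            constructor <;> cases this <;> linarith
          · have := hGb y hy
            rw [abs_le] at *
            constructor <;> cases this <;> linarith
        · have hT : T (k+1) (μseq k) ((↑G : Set ℝ)ᶜ) = 0 := T_null hF0 (k+1)
          have hs1 : S (-(3:ℝ)^k) (T (k+1) (μseq k))
              ((↑(G.image (· + (-(3:ℝ)^k))) : Set ℝ)ᶜ) = 0 := S_null hT _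
          have hs2 : S ((3:ℝ)^k) (T (k+1) (μseq k))
              ((↑(G.image (· + (3:ℝ)^k)) : Set ℝ)ᶜ) = 0 := S_null hT _
          rw [μseq, Measure.add_apply, Measure.add_apply]
          rw [null_mono (F := F)
              (Finset.subset_union_left.trans Finset.subset_union_left) hF0,
            null_mono (F := G.image (· + (-(3:ℝ)^k)))
              (Finset.subset_union_right.trans Finset.subset_union_left) hs1,
            null_mono (F := G.image (· + (3:ℝ)^k)) Finset.subset_union_right hs2]
          simp

/-- Each `μ_s` is a positive finite discrete measure supported in `I_s`. -/
theorem museq_finite_discrete_support (s : ℕ) :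
    IsFiniteMeasure (μseq s) ∧
    ∃ F : Finset ℝ, (↑F : Set ℝ) ⊆ I s ∧ μseq s ((↑F : Set ℝ)ᶜ) = 0 := by
  obtain ⟨hfin, F, hFb, hF0⟩ := museq_aux s
  refine ⟨hfin, F, ?_, hF0⟩
  intro x hx
  have hb := hFb x hx
  have hc := cseq_le s
  have h3 : (1:ℝ) ≤ 3^s := one_le_pow₀ (by norm_num)
  rw [bseq, abs_le] at hb
  constructor <;> [skip; skip] <;> cases hb <;>
    first
    | (show ((1:ℝ) - 3^s)/2 - 1/3 < x; linarith)
    | (show x < ((3:ℝ)^s - 1)/2 + 1/3; linarith)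
end

section
/- With μ_s defined as in the recursive quasi-periodic construction (μ_0 = δ_0, μ_k = μ_{k-1} + (S_{-3^{k-1}} + S_{3^{k-1}}) T_k μ_{k-1}, with T_k the average of the 2k shifts by ±r_k j/k, r_k = 2^{-(k+1)^2}), the restriction of μ_j to the interval I_s = ((1-3^s)/2 - 1/3, (3^s-1)/2 + 1/3) equals μ_s for every j > s. -/
/-!
`T_k` smears a measure by at most `r_k`, so by induction `μ_k` is concentrated on `[-R_k, R_k]`
with `R_k = (3^k - 1)/2 + r_1 + ⋯ + r_k`, and `r_1 + ⋯ + r_k < 1/4`. The two pieces added to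
`μ_k` to form `μ_{k+1}` are concentrated on intervals of radius `R_{k+1} - 3^k < (3^k - 1)/2 + 1/4`
around `±3^k`, which miss `I_s ⊆ I_k`. Hence the restrictions of `μ_k, μ_{k+1}, …` to `I_s` all
agree, and `μ_s` itself is concentrated on `[-R_s, R_s] ⊆ I_s`.
-/

open MeasureTheory
open scoped ENNReal

open Set

lemma S_apply (t : ℝ) (ρ : Measure ℝ) (A : Set ℝ) : S t ρ A = ρ ((· + t) ⁻¹' A) :=
  (measurableEmbedding_addRight t).map_apply ρ A

lemma S_compl_Icc_eq_zero {ρ : Measure ℝ} {a b : ℝ} (hρ : ρ (Icc a b)ᶜ = 0) (t : ℝ) :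
    S t ρ (Icc (a + t) (b + t))ᶜ = 0 := by
  rwa [S_apply, preimage_compl, preimage_add_const_Icc, add_sub_cancel_right,
    add_sub_cancel_right]

lemma r_nonneg (k : ℕ) : 0 ≤ r k := by unfold r; positivity

lemma r_succ_le (k : ℕ) : r (k + 1) ≤ (1 / 2) ^ (k + 3) := by
  rw [one_div, inv_pow, ← zpow_natCast, ← zpow_neg]
  refine zpow_le_zpow_right₀ one_le_two ?_
  push_cast
  nlinarith

lemma abs_T_shift_le {k j : ℕ} (hj : j ∈ Finset.Icc 1 k) : |r k * j / k| ≤ r k := by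
  obtain ⟨-, hjk⟩ := Finset.mem_Icc.mp hj
  rw [abs_of_nonneg (by have := r_nonneg k; positivity), mul_div_assoc]
  refine mul_le_of_le_one_right (r_nonneg k) (div_le_one_of_le₀ ?_ k.cast_nonneg)
  exact_mod_cast hjk

lemma T_compl_Icc_eq_zero {ρ : Measure ℝ} {a b : ℝ} (hρ : ρ (Icc a b)ᶜ = 0) (k : ℕ) :
    T k ρ (Icc (a - r k) (b + r k))ᶜ = 0 := by
  have hshift : ∀ t, |t| ≤ r k → S t ρ (Icc (a - r k) (b + r k))ᶜ = 0 := fun t ht =>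
    measure_mono_null (compl_subset_compl.mpr (Icc_subset_Icc (by linarith [abs_le.mp ht])
      (by linarith [abs_le.mp ht]))) (S_compl_Icc_eq_zero hρ t)
  rw [T, Measure.smul_apply, Measure.finsetSum_apply, Finset.sum_eq_zero, smul_zero]
  intro j hj
  rw [Measure.add_apply, hshift _ (abs_neg (r k * j / k) ▸ abs_T_shift_le hj),
    hshift _ (abs_T_shift_le hj), add_zero]

/-- Dominates `(3^k - 1)/2 + r_1 + ⋯ + r_k`, because `r_{k+1} ≤ 2^{-(k+3)}`. -/
noncomputable def radius (k : ℕ) : ℝ := (3 ^ k - 1) / 2 + (1 / 4 - (1 / 2) ^ (k + 2))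

lemma radius_le (k : ℕ) : radius k ≤ (3 ^ k - 1) / 2 + 1 / 4 := by
  unfold radius
  linarith [pow_pos (one_half_pos (α := ℝ)) (k + 2)]

lemma radius_add_r_le (k : ℕ) : radius k + r (k + 1) ≤ radius (k + 1) - 3 ^ k := by
  unfold radius
  have := r_succ_le k
  rw [pow_succ (3 : ℝ), pow_succ (1 / 2 : ℝ) (k + 2)] at *
  linarith

lemma piece_compl_Icc_eq_zero {k : ℕ} (hμ : μseq k (Icc (-radius k) (radius k))ᶜ = 0) (t : ℝ) :
    S t (T (k + 1) (μseq k))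
      (Icc (t - (radius (k + 1) - 3 ^ k)) (t + (radius (k + 1) - 3 ^ k)))ᶜ = 0 := by
  have hT := T_compl_Icc_eq_zero hμ (k + 1)
  refine measure_mono_null (compl_subset_compl.mpr (Icc_subset_Icc ?_ ?_))
    (S_compl_Icc_eq_zero hT t) <;>
    linarith [radius_add_r_le k]

lemma μseq_compl_Icc_eq_zero (k : ℕ) : μseq k (Icc (-radius k) (radius k))ᶜ = 0 := by
  induction k with
  | zero => norm_num [μseq, radius]
  | succ k ih =>
    have h3 : (0 : ℝ) ≤ 3 ^ k := by positivity
    have hR : radius k ≤ radius (k + 1) := by linarith [radius_add_r_le k, r_nonneg (k + 1)]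
    have hpiece : ∀ t : ℝ, |t| = 3 ^ k →
        S t (T (k + 1) (μseq k)) (Icc (-radius (k + 1)) (radius (k + 1)))ᶜ = 0 := by
      intro t ht
      refine measure_mono_null (compl_subset_compl.mpr (Icc_subset_Icc ?_ ?_))
        (piece_compl_Icc_eq_zero ih t) <;>
        cases abs_eq h3 |>.mp ht <;> linarith
    rw [μseq, Measure.add_apply, Measure.add_apply, hpiece _ (by simp), hpiece _ (by simp),
      measure_mono_null (compl_subset_compl.mpr (Icc_subset_Icc (neg_le_neg hR) hR)) ih]
    simp

lemma μseq_restrict_I_self (s : ℕ) : (μseq s).restrict (I s) = μseq s := by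
  refine Measure.restrict_eq_self_of_ae_mem (mem_ae_iff.mpr ?_)
  refine measure_mono_null (compl_subset_compl.mpr fun x hx => ?_) (μseq_compl_Icc_eq_zero s)
  have := radius_le s
  exact ⟨by linarith [hx.1], by linarith [hx.2]⟩

lemma μseq_succ_restrict_I {s k : ℕ} (hsk : s ≤ k) :
    (μseq (k + 1)).restrict (I s) = (μseq k).restrict (I s) := by
  have h3 : (3 : ℝ) ^ s ≤ 3 ^ k := pow_le_pow_right₀ (by norm_num) hsk
  have hR := radius_le (k + 1)
  rw [pow_succ] at hR
  have hpiece : ∀ t : ℝ, |t| = 3 ^ k → S t (T (k + 1) (μseq k)) (I s) = 0 := by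
    intro t ht
    refine measure_mono_null ?_ (piece_compl_Icc_eq_zero (μseq_compl_Icc_eq_zero k) t)
    rintro x ⟨hl, hu⟩ ⟨hl', hu'⟩
    cases abs_eq (by positivity) |>.mp ht <;> linarith
  have hpieces :
      (S (-3 ^ k) (T (k + 1) (μseq k)) + S (3 ^ k) (T (k + 1) (μseq k))) (I s) = 0 := by
    rw [Measure.add_apply, hpiece _ (by simp), hpiece _ (by simp), add_zero]
  rw [μseq, Measure.restrict_add, Measure.restrict_eq_zero.mpr hpieces, add_zero]

/-- The restriction of `μ_j` to `I_s` equals `μ_s` for every `j > s`. -/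
theorem museq_restrict_eq (s j : ℕ) (h : s < j) :
    (μseq j).restrict (I s) = μseq s := by
  induction j, h using Nat.le_induction with
  | base => rw [μseq_succ_restrict_I le_rfl, μseq_restrict_I_self]
  | succ j hj ih => rw [μseq_succ_restrict_I (by omega), ih]
end
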